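/- arXiv:1806.04732 — 2 statements merged into one kernel-verified Lean document; each statement's English description precedes it below -/
import Mathlib

section
/- Let sqrt((sqrt(5)-1)/2) < r < 1 and 0 < α < 1 be fixed. Define f(d) = sqrt(α * 2^d * (1 - r^d)) and g(d) = 2α / (r^d * (sqrt(1 + 2α(sqrt(1-r^2)/r^2)^d) + 1)). Then f(d)/g(d) tends to infinity as d → ∞. -/
/-!
Since `r ^ d → 0`, eventually `1 - r ^ d ≥ 1/2`, so the numerator is at least `√(α/2) · (√2) ^ d`;
since the square root in the denominator is at least `1`, the denominator is at most `α / r ^ d`.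
Hence the ratio is eventually at least `(√(α/2) / α) · (√2 · r) ^ d`, which diverges because
`r ^ 2 > (√5 - 1) / 2 > 1 / 2`.
-/

open Filter Real

lemma sqrt_half_le_sqrt_golden : √(1 / 2) ≤ √((√5 - 1) / 2) := by
  have h5 : (2 : ℝ) ≤ √5 := by
    rw [show (2 : ℝ) = √(2 ^ 2) from (sqrt_sq zero_le_two).symm]
    exact sqrt_le_sqrt (by norm_num)
  exact sqrt_le_sqrt (by linarith)

lemma one_lt_sqrt_two_mul {r : ℝ} (hr : √(1 / 2) < r) : 1 < √2 * r :=
  calc 1 = √2 * √(1 / 2) := by rw [← sqrt_mul zero_le_two]; norm_num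
    _ < √2 * r := by gcongr

lemma sqrt_half_mul_sqrt_two_pow_le {α x : ℝ} (hα : 0 ≤ α) (hx : x ≤ 1 / 2) (d : ℕ) :
    √(α / 2) * √2 ^ d ≤ √(α * 2 ^ d * (1 - x)) := by
  have hsq : α / 2 * 2 ^ d ≤ α * 2 ^ d * (1 - x) := by
    nlinarith [mul_nonneg (mul_nonneg hα (pow_nonneg zero_le_two d)) (sub_nonneg.mpr hx)]
  rwa [le_sqrt (by positivity) ((by positivity : 0 ≤ α / 2 * 2 ^ d).trans hsq), mul_pow,
    sq_sqrt (by positivity), ← pow_mul, pow_mul', sq_sqrt zero_le_two]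

lemma two_mul_div_mul_sqrt_one_add_add_one_le {α t y : ℝ} (hα : 0 ≤ α) (ht : 0 < t) (hy : 0 ≤ y) :
    2 * α / (t * (√(1 + y) + 1)) ≤ α / t := by
  have hs : 1 ≤ √(1 + y) := one_le_sqrt.mpr (by linarith)
  rw [div_le_div_iff₀ (by positivity) ht]
  nlinarith [mul_nonneg hα ht.le]

theorem stmt_8_general (r α : ℝ) (hr0 : Real.sqrt ((Real.sqrt 5 - 1) / 2) < r) (hr1 : r < 1)
    (hα0 : 0 < α) :
    Filter.Tendsto
      (fun d : ℕ =>
        Real.sqrt (α * 2 ^ d * (1 - r ^ d)) /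
          (2 * α / (r ^ d * (Real.sqrt (1 + 2 * α * (Real.sqrt (1 - r ^ 2) / r ^ 2) ^ d) + 1))))
      Filter.atTop Filter.atTop := by
  have hr : 0 < r := (sqrt_nonneg _).trans_lt hr0
  have hgrowth : 1 < √2 * r := one_lt_sqrt_two_mul (sqrt_half_le_sqrt_golden.trans_lt hr0)
  have hsmall : ∀ᶠ d : ℕ in atTop, r ^ d ≤ 1 / 2 :=
    (tendsto_pow_atTop_nhds_zero_of_lt_one hr.le hr1).eventually (eventually_le_nhds (by norm_num))
  refine tendsto_atTop_mono' _ ?_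
    ((tendsto_pow_atTop_atTop_of_one_lt hgrowth).const_mul_atTop (r := √(α / 2) / α)
      (by positivity))
  filter_upwards [hsmall] with d hd
  calc √(α / 2) / α * (√2 * r) ^ d = √(α / 2) * √2 ^ d / (α / r ^ d) := by
        rw [mul_pow]; field_simp
    _ ≤ _ := div_le_div₀ (sqrt_nonneg _) (sqrt_half_mul_sqrt_two_pow_le hα0.le hd d)
        (by positivity) (two_mul_div_mul_sqrt_one_add_add_one_le hα0.le (by positivity)
          (by positivity))

theorem stmt_8 (r α : ℝ) (hr0 : Real.sqrt ((Real.sqrt 5 - 1) / 2) < r) (hr1 : r < 1)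
    (hα0 : 0 < α) (hα1 : α < 1) :
    Filter.Tendsto
      (fun d : ℕ =>
        Real.sqrt (α * 2 ^ d * (1 - r ^ d)) /
          (2 * α / (r ^ d * (Real.sqrt (1 + 2 * α * (Real.sqrt (1 - r ^ 2) / r ^ 2) ^ d) + 1))))
      Filter.atTop Filter.atTop :=
  stmt_8_general r α hr0 hr1 hα0
end

section
/- Let 0 < r < sqrt((sqrt(5)-1)/2) and 0 < α < 1 be fixed. Define f(d) = sqrt(α * 2^d * (1 - r^d)) and g(d) = 2α / (r^d * (sqrt(1 + 2α(sqrt(1-r^2)/r^2)^d) + 1)). Then f(d)/g(d) tends to infinity as d → ∞. -/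
/-!
Squaring away the roots, for `d ≥ 1` the ratio is at least `√((1 - r) / 2 · (2√(1 - r²))ᵈ)`:
bound `1 - rᵈ ≥ 1 - r` and `√(1 + 2α cᵈ) + 1 ≥ √(2α cᵈ)` with `c = √(1 - r²) / r²`, and note
`2 r² c = 2√(1 - r²)`. The hypothesis on `r` gives `r² < 3/4`, i.e. `2√(1 - r²) > 1`, so this
lower bound grows geometrically.
-/

open Filter Real

lemma sq_lt_three_quarters_of_lt_sqrt {r : ℝ} (hr0 : 0 ≤ r) (hr : r < √((√5 - 1) / 2)) :
    r ^ 2 < 3 / 4 := by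
  have h5 : √5 < 5 / 2 := (sqrt_lt' (by norm_num)).2 (by norm_num)
  have := (lt_sqrt hr0).1 hr
  linarith

lemma one_lt_two_mul_sqrt_one_sub_sq {r : ℝ} (hr : r ^ 2 < 3 / 4) : 1 < 2 * √(1 - r ^ 2) := by
  have : 1 / 2 < √(1 - r ^ 2) := (lt_sqrt (by norm_num)).2 (by linarith)
  linarith

lemma tendsto_sqrt_const_mul_pow_atTop {K x : ℝ} (hK : 0 < K) (hx : 1 < x) :
    Tendsto (fun d : ℕ => √(K * x ^ d)) atTop atTop :=
  tendsto_sqrt_atTop.comp ((tendsto_pow_atTop_atTop_of_one_lt hx).const_mul_atTop hK)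

lemma sqrt_le_ratio {r α : ℝ} (hr0 : 0 < r) (hr1 : r < 1) (hα : 0 < α) {d : ℕ} (hd : 1 ≤ d) :
    √((1 - r) / 2 * (2 * √(1 - r ^ 2)) ^ d) ≤
      √(α * 2 ^ d * (1 - r ^ d)) /
        (2 * α / (r ^ d * (√(1 + 2 * α * (√(1 - r ^ 2) / r ^ 2) ^ d) + 1))) := by
  set c := √(1 - r ^ 2) / r ^ 2 with hc_def
  have hc : 0 ≤ c := by positivity
  clear_value c
  have hrd : 1 - r ≤ 1 - r ^ d := by linarith [pow_le_of_le_one hr0.le hr1.le (by omega : d ≠ 0)]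
  have hrd0 : 0 ≤ α * 2 ^ d * (1 - r ^ d) := mul_nonneg (by positivity) (by linarith)
  have hS : 2 * α * c ^ d ≤ (√(1 + 2 * α * c ^ d) + 1) ^ 2 := by
    have := sq_sqrt (by positivity : 0 ≤ 1 + 2 * α * c ^ d)
    nlinarith [sqrt_nonneg (1 + 2 * α * c ^ d)]
  rw [div_div_eq_mul_div, sqrt_le_left (by positivity)]
  calc (1 - r) / 2 * (2 * √(1 - r ^ 2)) ^ d
      = α * 2 ^ d * (1 - r) * (r ^ d) ^ 2 * (2 * α * c ^ d) / (2 * α) ^ 2 := by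
        rw [show √(1 - r ^ 2) = r ^ 2 * c by rw [hc_def]; field_simp]
        field_simp
        ring
    _ ≤ α * 2 ^ d * (1 - r ^ d) * (r ^ d) ^ 2 * (√(1 + 2 * α * c ^ d) + 1) ^ 2 / (2 * α) ^ 2 := by
        have := mul_nonneg hrd0 (sq_nonneg (r ^ d))
        gcongr
    _ = (√(α * 2 ^ d * (1 - r ^ d)) * (r ^ d * (√(1 + 2 * α * c ^ d) + 1)) / (2 * α)) ^ 2 := by
        rw [div_pow, mul_pow, mul_pow, sq_sqrt hrd0]
        ring

theorem stmt_9_general (r α : ℝ) (hr0 : 0 < r) (hr1 : r < Real.sqrt ((Real.sqrt 5 - 1) / 2))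
    (hα0 : 0 < α) :
    Filter.Tendsto
      (fun d : ℕ =>
        Real.sqrt (α * 2 ^ d * (1 - r ^ d)) /
          (2 * α / (r ^ d * (Real.sqrt (1 + 2 * α * (Real.sqrt (1 - r ^ 2) / r ^ 2) ^ d) + 1))))
      Filter.atTop Filter.atTop := by
  have hr2 := sq_lt_three_quarters_of_lt_sqrt hr0.le hr1
  have hr1 : r < 1 := by nlinarith
  refine tendsto_atTop_mono' _ ?_ <|
    tendsto_sqrt_const_mul_pow_atTop (K := (1 - r) / 2) (by linarith) (one_lt_two_mul_sqrt_one_sub_sq hr2)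
  filter_upwards [eventually_ge_atTop 1] with d hd
  exact sqrt_le_ratio hr0 hr1 hα0 hd

theorem stmt_9 (r α : ℝ) (hr0 : 0 < r) (hr1 : r < Real.sqrt ((Real.sqrt 5 - 1) / 2))
    (hα0 : 0 < α) (hα1 : α < 1) :
    Filter.Tendsto
      (fun d : ℕ =>
        Real.sqrt (α * 2 ^ d * (1 - r ^ d)) /
          (2 * α / (r ^ d * (Real.sqrt (1 + 2 * α * (Real.sqrt (1 - r ^ 2) / r ^ 2) ^ d) + 1))))
      Filter.atTop Filter.atTop :=
  stmt_9_general r α hr0 hr1 hα0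
end
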